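/- The union over all n ≥ 1 of the sets of real eigenvalues of the BBS translation transition operators M_B^{(n)} is a dense subset of the interval [−1, 1]. -/
import Mathlib


open Matrix

/-- Equivalence identifying `Fin (2^n) ⊕ Fin (2^n)` with `Fin (2^(n+1))`. -/
def blockEquiv (n : ℕ) : Fin (2 ^ n) ⊕ Fin (2 ^ n) ≃ Fin (2 ^ (n + 1)) :=
  finSumFinEquiv.trans (finCongr (by rw [pow_succ, mul_two]))

/-- Assemble a `2^(n+1) × 2^(n+1)` matrix from four `2^n × 2^n` blocks. -/
noncomputable def mkBlock {n : ℕ} (A B C D : Matrix (Fin (2 ^ n)) (Fin (2 ^ n)) ℝ) :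
    Matrix (Fin (2 ^ (n + 1))) (Fin (2 ^ (n + 1))) ℝ :=
  Matrix.reindex (blockEquiv n) (blockEquiv n) (Matrix.fromBlocks A B C D)

/-- The pair of BBS translation generators. -/
noncomputable def abB : (n : ℕ) →
    Matrix (Fin (2 ^ n)) (Fin (2 ^ n)) ℝ × Matrix (Fin (2 ^ n)) (Fin (2 ^ n)) ℝ
  | 0 => (1, 1)
  | n + 1 => (mkBlock (abB n).1 (abB n).2 0 0, mkBlock 0 0 (abB n).1 (abB n).2)

noncomputable def aB (n : ℕ) : Matrix (Fin (2 ^ n)) (Fin (2 ^ n)) ℝ := (abB n).1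
noncomputable def bB (n : ℕ) : Matrix (Fin (2 ^ n)) (Fin (2 ^ n)) ℝ := (abB n).2

/-- The pair of lamplighter generators. -/
noncomputable def abL : (n : ℕ) →
    Matrix (Fin (2 ^ n)) (Fin (2 ^ n)) ℝ × Matrix (Fin (2 ^ n)) (Fin (2 ^ n)) ℝ
  | 0 => (1, 1)
  | n + 1 => (mkBlock 0 (abL n).2 (abL n).1 0, mkBlock (abL n).1 0 0 (abL n).2)

noncomputable def aL (n : ℕ) : Matrix (Fin (2 ^ n)) (Fin (2 ^ n)) ℝ := (abL n).1
noncomputable def bL (n : ℕ) : Matrix (Fin (2 ^ n)) (Fin (2 ^ n)) ℝ := (abL n).2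

/-- The BBS translation transition operator. -/
noncomputable def MB (n : ℕ) : Matrix (Fin (2 ^ n)) (Fin (2 ^ n)) ℝ :=
  (1 / 4 : ℝ) • (aB n + (aB n)ᵀ + bB n + (bB n)ᵀ)

/-- The lamplighter transition operator. -/
noncomputable def ML (n : ℕ) : Matrix (Fin (2 ^ n)) (Fin (2 ^ n)) ℝ :=
  (1 / 4 : ℝ) • (aL n + (aL n)ᵀ + bL n + (bL n)ᵀ)

-- infrastructure
lemma aB_succ (n : ℕ) : aB (n+1) = mkBlock (aB n) (bB n) 0 0 := rfl
lemma bB_succ (n : ℕ) : bB (n+1) = mkBlock 0 0 (aB n) (bB n) := rfl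

lemma mkBlock_apply {n : ℕ} (A B C D : Matrix (Fin (2 ^ n)) (Fin (2 ^ n)) ℝ) (x y) :
    mkBlock A B C D x y
      = fromBlocks A B C D ((blockEquiv n).symm x) ((blockEquiv n).symm y) := rfl

lemma sum_blockEquiv {n : ℕ} (f : Fin (2 ^ (n+1)) → ℝ) :
    ∑ x, f x = (∑ y, f (blockEquiv n (Sum.inl y))) + ∑ y, f (blockEquiv n (Sum.inr y)) := by
  rw [← Equiv.sum_comp (blockEquiv n) f, Fintype.sum_sum_type]

lemma mkBlock_transpose {n : ℕ} (A B C D : Matrix (Fin (2 ^ n)) (Fin (2 ^ n)) ℝ) :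
    (mkBlock A B C D)ᵀ = mkBlock Aᵀ Cᵀ Bᵀ Dᵀ := by
  simp [mkBlock, transpose_reindex, fromBlocks_transpose]

lemma mulVec_mkBlock_inl {n : ℕ} (A B C D : Matrix (Fin (2 ^ n)) (Fin (2 ^ n)) ℝ)
    (v : Fin (2 ^ (n+1)) → ℝ) (y : Fin (2 ^ n)) :
    (mkBlock A B C D *ᵥ v) (blockEquiv n (Sum.inl y))
      = (A *ᵥ fun t => v (blockEquiv n (Sum.inl t))) y
        + (B *ᵥ fun t => v (blockEquiv n (Sum.inr t))) y := by
  simp only [mulVec, dotProduct]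
  rw [sum_blockEquiv (fun x => mkBlock A B C D (blockEquiv n (Sum.inl y)) x * v x)]
  simp [mkBlock_apply, Equiv.symm_apply_apply]

lemma mulVec_mkBlock_inr {n : ℕ} (A B C D : Matrix (Fin (2 ^ n)) (Fin (2 ^ n)) ℝ)
    (v : Fin (2 ^ (n+1)) → ℝ) (y : Fin (2 ^ n)) :
    (mkBlock A B C D *ᵥ v) (blockEquiv n (Sum.inr y))
      = (C *ᵥ fun t => v (blockEquiv n (Sum.inl t))) y
        + (D *ᵥ fun t => v (blockEquiv n (Sum.inr t))) y := by
  simp only [mulVec, dotProduct]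
  rw [sum_blockEquiv (fun x => mkBlock A B C D (blockEquiv n (Sum.inr y)) x * v x)]
  simp [mkBlock_apply, Equiv.symm_apply_apply]

noncomputable def FB : (n : ℕ) → ℕ → Fin (2 ^ n) → ℝ
  | 0, 0 => fun _ => 1
  | 0, _+1 => fun _ => 0
  | _+1, 0 => fun _ => 1
  | n+1, i+1 => fun x =>
      Sum.elim (fun y => if i = 0 then 1 else FB n i y)
               (fun y => if i = 0 then -1 else FB n i y) ((blockEquiv n).symm x)

lemma FB_zero (n : ℕ) : FB n 0 = fun _ => 1 := by cases n <;> rfl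

lemma FB_inl (n i : ℕ) (y : Fin (2 ^ n)) :
    FB (n+1) (i+1) (blockEquiv n (Sum.inl y)) = if i = 0 then 1 else FB n i y := by
  simp [FB, Equiv.symm_apply_apply]

lemma FB_inr (n i : ℕ) (y : Fin (2 ^ n)) :
    FB (n+1) (i+1) (blockEquiv n (Sum.inr y)) = if i = 0 then -1 else FB n i y := by
  simp [FB, Equiv.symm_apply_apply]

lemma FB_gt : ∀ n i, n < i → FB n i = fun _ => 0 := by
  intro n
  induction n with
  | zero => intro i hi; match i, hi with | i+1, _ => rfl
  | succ n ih =>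
      intro i hi
      match i, hi with
      | i+1, hi =>
        funext x
        obtain ⟨s, rfl⟩ := (blockEquiv n).surjective x
        have hne : i ≠ 0 := by omega
        cases s with
        | inl y => rw [FB_inl, if_neg hne, ih i (by omega)]
        | inr y => rw [FB_inr, if_neg hne, ih i (by omega)]


lemma finPowZero (i : Fin (2 ^ 0)) : i = 0 :=
  Fin.ext (by have := i.isLt; norm_num at this; omega)

-- row sums
lemma rowsum_aB_add_bB : ∀ n (i : Fin (2 ^ n)), (∑ j, aB n i j) + (∑ j, bB n i j) = 2 := by
  intro n
  induction n with
  | zero =>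
      intro i
      show (∑ j, (1 : Matrix (Fin 1) (Fin 1) ℝ) i j) + (∑ j, (1 : Matrix (Fin 1) (Fin 1) ℝ) i j) = 2
      simp only [Matrix.one_apply, Finset.sum_ite_eq, Finset.mem_univ, if_true]
      norm_num
  | succ n ih =>
      intro x
      obtain ⟨s, rfl⟩ := (blockEquiv n).surjective x
      rw [aB_succ, bB_succ,
        sum_blockEquiv (fun j => mkBlock (aB n) (bB n) 0 0 (blockEquiv n s) j),
        sum_blockEquiv (fun j => mkBlock 0 0 (aB n) (bB n) (blockEquiv n s) j)]
      cases s with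
      | inl y =>
          simp only [mkBlock_apply, Equiv.symm_apply_apply, fromBlocks_apply₁₁,
            fromBlocks_apply₁₂, Matrix.zero_apply, Finset.sum_const_zero]
          have := ih y
          linarith
      | inr y =>
          simp only [mkBlock_apply, Equiv.symm_apply_apply, fromBlocks_apply₂₁,
            fromBlocks_apply₂₂, Matrix.zero_apply, Finset.sum_const_zero]
          have := ih y
          linarith

lemma rowsum_aB_sub_bB : ∀ n (i : Fin (2 ^ n)),
    (∑ j, aB n i j) - (∑ j, bB n i j) = 2 * FB n 1 i := by
  intro n
  cases n with
  | zero =>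
      intro i
      show (∑ j, (1 : Matrix (Fin 1) (Fin 1) ℝ) i j) - (∑ j, (1 : Matrix (Fin 1) (Fin 1) ℝ) i j)
        = 2 * FB 0 1 i
      show _ = 2 * (0:ℝ)
      simp
  | succ n =>
      intro x
      obtain ⟨s, rfl⟩ := (blockEquiv n).surjective x
      rw [aB_succ, bB_succ,
        sum_blockEquiv (fun j => mkBlock (aB n) (bB n) 0 0 (blockEquiv n s) j),
        sum_blockEquiv (fun j => mkBlock 0 0 (aB n) (bB n) (blockEquiv n s) j)]
      cases s with
      | inl y =>
          simp only [mkBlock_apply, Equiv.symm_apply_apply, fromBlocks_apply₁₁,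
            fromBlocks_apply₁₂, Matrix.zero_apply, Finset.sum_const_zero]
          rw [FB_inl]
          have := rowsum_aB_add_bB n y
          norm_num
          linarith
      | inr y =>
          simp only [mkBlock_apply, Equiv.symm_apply_apply, fromBlocks_apply₂₁,
            fromBlocks_apply₂₂, Matrix.zero_apply, Finset.sum_const_zero]
          rw [FB_inr]
          have := rowsum_aB_add_bB n y
          norm_num
          linarith

lemma colsum_aB_bB : ∀ n (j : Fin (2 ^ n)), (∑ i, aB n i j) = 1 ∧ (∑ i, bB n i j) = 1 := by
  intro n
  induction n with
  | zero =>
      intro j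
      constructor <;>
      · show (∑ i, (1 : Matrix (Fin 1) (Fin 1) ℝ) i j) = 1
        simp [Matrix.one_apply, finPowZero j]
  | succ n ih =>
      intro x
      obtain ⟨s, rfl⟩ := (blockEquiv n).surjective x
      rw [aB_succ, bB_succ]
      constructor
      all_goals
        rw [sum_blockEquiv]
        cases s with
        | inl y =>
            simp only [mkBlock_apply, Equiv.symm_apply_apply, fromBlocks_apply₁₁,
              fromBlocks_apply₂₁, Matrix.zero_apply, Finset.sum_const_zero]
            simp [(ih y).1, (ih y).2]
        | inr y =>
            simp only [mkBlock_apply, Equiv.symm_apply_apply, fromBlocks_apply₁₂,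
              fromBlocks_apply₂₂, Matrix.zero_apply, Finset.sum_const_zero]
            simp [(ih y).1, (ih y).2]

lemma nonneg_aB_bB : ∀ n (i j : Fin (2 ^ n)), 0 ≤ aB n i j ∧ 0 ≤ bB n i j := by
  intro n
  induction n with
  | zero =>
      intro i j
      constructor <;>
      · show (0:ℝ) ≤ (1 : Matrix (Fin 1) (Fin 1) ℝ) i j
        rw [Matrix.one_apply]
        positivity
  | succ n ih =>
      intro x z
      obtain ⟨s, rfl⟩ := (blockEquiv n).surjective x
      obtain ⟨t, rfl⟩ := (blockEquiv n).surjective z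
      rw [aB_succ, bB_succ]
      simp only [mkBlock_apply, Equiv.symm_apply_apply]
      cases s <;> cases t <;>
        simp [fromBlocks, (ih _ _).1, (ih _ _).2]

lemma mulVec_one_const {n : ℕ} (c : ℝ) (y : Fin (2^n)) :
    ((1 : Matrix (Fin (2^n)) (Fin (2^n)) ℝ) *ᵥ fun _ => c) y = c := by
  simp [mulVec, dotProduct, Matrix.one_apply]

-- (S): forward shift
lemma S_shift : ∀ n i, 1 ≤ i →
    ∀ x, ((aB n + bB n) *ᵥ FB n i) x = 2 * FB n (i+1) x := by
  intro n
  induction n with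
  | zero =>
      intro i hi x
      rw [FB_gt 0 i (by omega), FB_gt 0 (i+1) (by omega)]
      simp [mulVec, dotProduct]
  | succ n ih =>
      intro i hi x
      obtain ⟨s, rfl⟩ := (blockEquiv n).surjective x
      rw [add_mulVec, aB_succ, bB_succ]
      match i, hi with
      | 1, _ =>
          cases s with
          | inl y =>
              rw [Pi.add_apply, mulVec_mkBlock_inl, mulVec_mkBlock_inl, FB_inl]
              simp only [FB_inl, FB_inr, if_pos rfl, if_neg one_ne_zero]
              have h1 := rowsum_aB_sub_bB n y
              have hA : (aB n *ᵥ fun _ => (1:ℝ)) y = ∑ j, aB n y j := by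
                simp [mulVec, dotProduct]
              have hB : (bB n *ᵥ fun _ => (-1:ℝ)) y = -∑ j, bB n y j := by
                simp [mulVec, dotProduct]
              simp only [if_true, Matrix.zero_mulVec, Pi.zero_apply, add_zero, zero_add, hA, hB]
              linarith [h1]
          | inr y =>
              rw [Pi.add_apply, mulVec_mkBlock_inr, mulVec_mkBlock_inr, FB_inr]
              simp only [FB_inl, FB_inr, if_pos rfl, if_neg one_ne_zero]
              have h1 := rowsum_aB_sub_bB n y
              have hA : (aB n *ᵥ fun _ => (1:ℝ)) y = ∑ j, aB n y j := by
                simp [mulVec, dotProduct]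
              have hB : (bB n *ᵥ fun _ => (-1:ℝ)) y = -∑ j, bB n y j := by
                simp [mulVec, dotProduct]
              simp only [if_true, Matrix.zero_mulVec, Pi.zero_apply, add_zero, zero_add, hA, hB]
              linarith [h1]
      | (j+2), _ =>
          have hFl : ∀ t, FB (n+1) (j+2) (blockEquiv n (Sum.inl t)) = FB n (j+1) t := by
            intro t; rw [FB_inl, if_neg (Nat.succ_ne_zero j)]
          have hFr : ∀ t, FB (n+1) (j+2) (blockEquiv n (Sum.inr t)) = FB n (j+1) t := by
            intro t; rw [FB_inr, if_neg (Nat.succ_ne_zero j)]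
          have key := ih (j+1) (by omega)
          cases s with
          | inl y =>
              rw [Pi.add_apply, mulVec_mkBlock_inl, mulVec_mkBlock_inl, FB_inl,
                if_neg (by omega : ¬ j + 2 = 0)]
              simp only [hFl, hFr]
              have := key y
              rw [add_mulVec, Pi.add_apply] at this
              simp only [Matrix.zero_mulVec, Pi.zero_apply, add_zero, zero_add]
              linarith
          | inr y =>
              rw [Pi.add_apply, mulVec_mkBlock_inr, mulVec_mkBlock_inr, FB_inr,
                if_neg (by omega : ¬ j + 2 = 0)]
              simp only [hFl, hFr]
              have := key y
              rw [add_mulVec, Pi.add_apply] at this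
              simp only [Matrix.zero_mulVec, Pi.zero_apply, add_zero, zero_add]
              linarith

lemma aB_T_succ (n : ℕ) : (aB (n+1))ᵀ = mkBlock (aB n)ᵀ 0 (bB n)ᵀ 0 := by
  rw [aB_succ, mkBlock_transpose, transpose_zero]
lemma bB_T_succ (n : ℕ) : (bB (n+1))ᵀ = mkBlock 0 (aB n)ᵀ 0 (bB n)ᵀ := by
  rw [bB_succ, mkBlock_transpose, transpose_zero]

lemma mulVec_T_const {n : ℕ} (M : Matrix (Fin (2^n)) (Fin (2^n)) ℝ) (c : ℝ) (y : Fin (2^n)) :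
    (Mᵀ *ᵥ fun _ => c) y = (∑ t, M t y) * c := by
  simp [mulVec, dotProduct, Finset.sum_mul]

lemma T_shift : ∀ n i, 1 ≤ i → i ≤ n →
    (∀ x, ((aB n)ᵀ *ᵥ FB n i) x = FB n (i-1) x) ∧
    (∀ x, ((bB n)ᵀ *ᵥ FB n i) x = if i = 1 then -1 else FB n (i-1) x) := by
  intro n
  induction n with
  | zero => intro i h1 h2; omega
  | succ n ih =>
      intro i h1 h2
      match i, h1 with
      | 1, _ =>
          have hca : ∀ y : Fin (2^n), ∑ t, aB n t y = 1 := fun y => (colsum_aB_bB n y).1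
          have hcb : ∀ y : Fin (2^n), ∑ t, bB n t y = 1 := fun y => (colsum_aB_bB n y).2
          have hF1l : ∀ t, FB (n+1) 1 (blockEquiv n (Sum.inl t)) = 1 := by
            intro t; rw [FB_inl]; simp
          have hF1r : ∀ t, FB (n+1) 1 (blockEquiv n (Sum.inr t)) = -1 := by
            intro t; rw [FB_inr]; simp
          constructor
          · intro x
            obtain ⟨s, rfl⟩ := (blockEquiv n).surjective x
            rw [aB_T_succ]
            cases s with
            | inl y =>
                rw [mulVec_mkBlock_inl]
                simp only [hF1l, hF1r, Matrix.zero_mulVec, Pi.zero_apply, add_zero]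
                rw [mulVec_T_const, hca, FB_zero]
                norm_num
            | inr y =>
                rw [mulVec_mkBlock_inr]
                simp only [hF1l, hF1r, Matrix.zero_mulVec, Pi.zero_apply, add_zero]
                rw [mulVec_T_const, hcb, FB_zero]
                norm_num
          · intro x
            obtain ⟨s, rfl⟩ := (blockEquiv n).surjective x
            rw [bB_T_succ, if_pos rfl]
            cases s with
            | inl y =>
                rw [mulVec_mkBlock_inl]
                simp only [hF1l, hF1r, Matrix.zero_mulVec, Pi.zero_apply, zero_add]
                rw [mulVec_T_const, hca]
                norm_num
            | inr y =>
                rw [mulVec_mkBlock_inr]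
                simp only [hF1l, hF1r, Matrix.zero_mulVec, Pi.zero_apply, zero_add]
                rw [mulVec_T_const, hcb]
                norm_num
      | (j+2), _ =>
          have hj : j + 1 ≤ n := by omega
          have IH := ih (j+1) (by omega) hj
          have hFl : ∀ t, FB (n+1) (j+2) (blockEquiv n (Sum.inl t)) = FB n (j+1) t := by
            intro t; rw [FB_inl, if_neg (Nat.succ_ne_zero j)]
          have hFr : ∀ t, FB (n+1) (j+2) (blockEquiv n (Sum.inr t)) = FB n (j+1) t := by
            intro t; rw [FB_inr, if_neg (Nat.succ_ne_zero j)]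
          have hFj0 : j = 0 → ∀ y : Fin (2^n), FB n j y = 1 := by
            intro h y; subst h; rw [FB_zero]
          constructor
          · intro x
            obtain ⟨s, rfl⟩ := (blockEquiv n).surjective x
            rw [aB_T_succ]
            cases s with
            | inl y =>
                rw [mulVec_mkBlock_inl]
                simp only [hFl, hFr, Matrix.zero_mulVec, Pi.zero_apply, add_zero]
                rw [show j + 2 - 1 = j + 1 from rfl, FB_inl]
                rw [IH.1 y]
                simp only [Nat.add_sub_cancel]
                by_cases hj0 : j = 0
                · rw [if_pos hj0, hFj0 hj0 y]
                · rw [if_neg hj0]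
            | inr y =>
                rw [mulVec_mkBlock_inr]
                simp only [hFl, hFr, Matrix.zero_mulVec, Pi.zero_apply, add_zero]
                rw [show j + 2 - 1 = j + 1 from rfl, FB_inr]
                rw [IH.2 y]
                simp only [Nat.add_sub_cancel]
                by_cases hj0 : j = 0
                · rw [if_pos hj0, if_pos (by omega : j + 1 = 1)]
                · rw [if_neg hj0, if_neg (by omega : ¬ j + 1 = 1)]
          · intro x
            obtain ⟨s, rfl⟩ := (blockEquiv n).surjective x
            rw [bB_T_succ, if_neg (by omega : ¬ j + 2 = 1)]
            cases s with
            | inl y =>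
                rw [mulVec_mkBlock_inl]
                simp only [hFl, hFr, Matrix.zero_mulVec, Pi.zero_apply, zero_add]
                rw [show j + 2 - 1 = j + 1 from rfl, FB_inl]
                rw [IH.1 y]
                simp only [Nat.add_sub_cancel]
                by_cases hj0 : j = 0
                · rw [if_pos hj0, hFj0 hj0 y]
                · rw [if_neg hj0]
            | inr y =>
                rw [mulVec_mkBlock_inr]
                simp only [hFl, hFr, Matrix.zero_mulVec, Pi.zero_apply, zero_add]
                rw [show j + 2 - 1 = j + 1 from rfl, FB_inr]
                rw [IH.2 y]
                simp only [Nat.add_sub_cancel]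
                by_cases hj0 : j = 0
                · rw [if_pos hj0, if_pos (by omega : j + 1 = 1)]
                · rw [if_neg hj0, if_neg (by omega : ¬ j + 1 = 1)]

lemma MB_mulVec_FB (n i : ℕ) (h1 : 1 ≤ i) (h2 : i ≤ n) (x : Fin (2^n)) :
    (MB n *ᵥ FB n i) x
      = (1/2) * FB n (i+1) x + (if i = 1 then 0 else (1/2) * FB n (i-1) x) := by
  have hS := S_shift n i h1 x
  have hT := T_shift n i h1 h2
  rw [add_mulVec, Pi.add_apply] at hS
  have expand : (MB n *ᵥ FB n i) x
      = (1/4) * ((aB n *ᵥ FB n i) x + ((aB n)ᵀ *ᵥ FB n i) x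
          + (bB n *ᵥ FB n i) x + ((bB n)ᵀ *ᵥ FB n i) x) := by
    rw [MB, smul_mulVec, Pi.smul_apply, add_mulVec, add_mulVec, add_mulVec]
    simp only [smul_eq_mul, Pi.add_apply]
    try ring
  rw [expand, hT.1 x, hT.2 x]
  by_cases hi1 : i = 1
  · subst hi1
    rw [if_pos rfl, if_pos rfl]
    have h0 : FB n 0 x = 1 := by rw [FB_zero]
    rw [show (1:ℕ) - 1 = 0 from rfl, h0]
    linarith
  · rw [if_neg hi1, if_neg hi1]
    linarith

lemma FB_one_sq (m : ℕ) :
    ∑ x, FB (m+1) 1 x * FB (m+1) 1 x = 2^(m+1) := by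
  rw [sum_blockEquiv (fun x => FB (m+1) 1 x * FB (m+1) 1 x)]
  have hl : ∀ t : Fin (2^m), FB (m+1) 1 (blockEquiv m (Sum.inl t)) = 1 := by
    intro t; rw [FB_inl]; simp
  have hr : ∀ t : Fin (2^m), FB (m+1) 1 (blockEquiv m (Sum.inr t)) = -1 := by
    intro t; rw [FB_inr]; simp
  simp only [hl, hr]
  simp [Finset.card_univ]
  ring

lemma FB_one_orth (m j : ℕ) :
    ∑ x, FB (m+1) (j+2) x * FB (m+1) 1 x = 0 := by
  rw [sum_blockEquiv (fun x => FB (m+1) (j+2) x * FB (m+1) 1 x)]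
  have hl : ∀ t : Fin (2^m), FB (m+1) 1 (blockEquiv m (Sum.inl t)) = 1 := by
    intro t; rw [FB_inl]; simp
  have hr : ∀ t : Fin (2^m), FB (m+1) 1 (blockEquiv m (Sum.inr t)) = -1 := by
    intro t; rw [FB_inr]; simp
  have hl2 : ∀ t : Fin (2^m), FB (m+1) (j+2) (blockEquiv m (Sum.inl t)) = FB m (j+1) t := by
    intro t; rw [FB_inl, if_neg (Nat.succ_ne_zero j)]
  have hr2 : ∀ t : Fin (2^m), FB (m+1) (j+2) (blockEquiv m (Sum.inr t)) = FB m (j+1) t := by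
    intro t; rw [FB_inr, if_neg (Nat.succ_ne_zero j)]
  simp only [hl, hr, hl2, hr2, mul_one, mul_neg_one, Finset.sum_neg_distrib]
  ring

lemma tridiag (N : ℕ) (hN : 1 ≤ N) (c f : ℕ → ℝ) (lam : ℝ)
    (hc0 : c 0 = 0) (hcN : c (N+1) = 0) (hfN : f (N+1) = 0)
    (hrec : ∀ j, 1 ≤ j → c (j-1) + c (j+1) = 2 * lam * c j) :
    ∑ i ∈ Finset.Icc 1 N, c i * ((1/2) * f (i+1) + (if i = 1 then 0 else (1/2) * f (i-1)))
      = ∑ i ∈ Finset.Icc 1 N, lam * (c i * f i) := by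
  have split : ∀ i ∈ Finset.Icc 1 N,
      c i * ((1/2) * f (i+1) + (if i = 1 then 0 else (1/2) * f (i-1)))
        = c i * (1/2) * f (i+1) + (if i = 1 then 0 else c i * (1/2) * f (i-1)) := by
    intro i _
    by_cases h : i = 1 <;> simp [h] <;> ring
  rw [Finset.sum_congr rfl split, Finset.sum_add_distrib]
  have e1 : ∑ i ∈ Finset.Icc 1 N, c i * (1/2) * f (i+1)
      = ∑ i ∈ Finset.Icc 1 N, c (i-1) * (1/2) * f i := by
    have step1 : ∑ i ∈ Finset.Icc 2 (N+1), c (i-1) * (1/2) * f i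
        = ∑ i ∈ Finset.Icc 1 N, c i * (1/2) * f (i+1) := by
      rw [← Finset.map_add_right_Icc 1 N 1, Finset.sum_map]
      apply Finset.sum_congr rfl
      intro i _
      simp [addRightEmbedding]
    have step2 : ∑ i ∈ Finset.Icc 2 (N+1), c (i-1) * (1/2) * f i
        = ∑ i ∈ Finset.Icc 1 (N+1), c (i-1) * (1/2) * f i := by
      apply Finset.sum_subset (Finset.Icc_subset_Icc (by omega) le_rfl)
      intro x hx hnx
      have hx1 : x = 1 := by
        simp only [Finset.mem_Icc] at hx hnx; omega
      subst hx1
      simp [hc0]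
    have step3 : ∑ i ∈ Finset.Icc 1 N, c (i-1) * (1/2) * f i
        = ∑ i ∈ Finset.Icc 1 (N+1), c (i-1) * (1/2) * f i := by
      apply Finset.sum_subset (Finset.Icc_subset_Icc le_rfl (by omega))
      intro x hx hnx
      have hx1 : x = N+1 := by
        simp only [Finset.mem_Icc] at hx hnx; omega
      subst hx1
      simp [hfN]
    rw [← step1, step2, ← step3]
  have e2 : ∑ i ∈ Finset.Icc 1 N, (if i = 1 then 0 else c i * (1/2) * f (i-1))
      = ∑ i ∈ Finset.Icc 1 N, c (i+1) * (1/2) * f i := by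
    have step0 : ∑ i ∈ Finset.Icc 1 N, (if i = 1 then (0:ℝ) else c i * (1/2) * f (i-1))
        = ∑ i ∈ Finset.Icc 2 N, c i * (1/2) * f (i-1) := by
      rw [show ∑ i ∈ Finset.Icc 2 N, c i * (1/2) * f (i-1)
          = ∑ i ∈ Finset.Icc 2 N, (if i = 1 then (0:ℝ) else c i * (1/2) * f (i-1)) from
        Finset.sum_congr rfl (fun i hi => by
          rw [if_neg (by simp only [Finset.mem_Icc] at hi; omega)])]
      symm
      apply Finset.sum_subset (Finset.Icc_subset_Icc (by omega) le_rfl)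
      intro x hx hnx
      have hx1 : x = 1 := by simp only [Finset.mem_Icc] at hx hnx; omega
      subst hx1
      simp
    have step1 : ∑ i ∈ Finset.Icc 2 N, c i * (1/2) * f (i-1)
        = ∑ i ∈ Finset.Icc 1 (N-1), c (i+1) * (1/2) * f i := by
      have hNN : (1:ℕ) + 1 = 2 := rfl
      have hN1 : N - 1 + 1 = N := by omega
      rw [show Finset.Icc 2 N = Finset.Icc (1+1) (N-1+1) by rw [hNN, hN1],
        ← Finset.map_add_right_Icc 1 (N-1) 1, Finset.sum_map]
      apply Finset.sum_congr rfl
      intro i _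
      simp [addRightEmbedding]
    have step2 : ∑ i ∈ Finset.Icc 1 (N-1), c (i+1) * (1/2) * f i
        = ∑ i ∈ Finset.Icc 1 N, c (i+1) * (1/2) * f i := by
      apply Finset.sum_subset (Finset.Icc_subset_Icc le_rfl (by omega))
      intro x hx hnx
      have hx1 : x = N := by simp only [Finset.mem_Icc] at hx hnx; omega
      subst hx1
      simp [hcN]
    rw [step0, step1, step2]
  rw [e1, e2, ← Finset.sum_add_distrib]
  apply Finset.sum_congr rfl
  intro i hi
  have hi1 : 1 ≤ i := by simp only [Finset.mem_Icc] at hi; exact hi.1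
  have hx : c (i-1) * (1/2) * f i + c (i+1) * (1/2) * f i
      = (c (i-1) + c (i+1)) * (1/2) * f i := by ring
  rw [hx, hrec i hi1]
  ring

open Real in
lemma eig_det (n k : ℕ) (hn : 1 ≤ n) (hk1 : 1 ≤ k) (hkn : k ≤ n) :
    (MB n - Real.cos (k * Real.pi / (n+1)) • (1 : Matrix (Fin (2^n)) (Fin (2^n)) ℝ)).det
      = 0 := by
  set θ := k * Real.pi / (n+1) with hθ
  have hn1 : ((n:ℝ) + 1) ≠ 0 := by positivity
  have hc0 : Real.sin ((0:ℕ) * θ) = 0 := by norm_num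
  have hcN : Real.sin (((n+1:ℕ):ℝ) * θ) = 0 := by
    have : ((n+1:ℕ):ℝ) * θ = k * Real.pi := by
      rw [hθ]; push_cast; field_simp
    rw [this]
    exact Real.sin_nat_mul_pi k
  have hrec : ∀ j, 1 ≤ j →
      Real.sin (((j-1:ℕ):ℝ) * θ) + Real.sin (((j+1:ℕ):ℝ) * θ)
        = 2 * Real.cos θ * Real.sin ((j:ℝ) * θ) := by
    intro j hj
    have hcast : ((j-1:ℕ):ℝ) = (j:ℝ) - 1 := by
      have := Nat.cast_sub (R := ℝ) hj; simpa using this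
    rw [hcast]
    push_cast
    have e1 : ((j:ℝ) - 1) * θ = (j:ℝ)*θ - θ := by ring
    have e2 : ((j:ℝ) + 1) * θ = (j:ℝ)*θ + θ := by ring
    rw [e1, e2, Real.sin_sub, Real.sin_add]
    ring
  have hFtop : ∀ x : Fin (2^n), FB n (n+1) x = 0 := by
    intro x; rw [FB_gt n (n+1) (by omega)]
  -- the eigenvector
  set v : Fin (2^n) → ℝ :=
    fun x => ∑ i ∈ Finset.range (n+2), Real.sin ((i:ℝ) * θ) * FB n i x with hv
  have sub1 : Finset.Icc 1 n ⊆ Finset.range (n+2) := by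
    intro i hi; simp only [Finset.mem_Icc] at hi; simp only [Finset.mem_range]; omega
  have hMv : ∀ x : Fin (2^n), (MB n *ᵥ v) x = Real.cos θ * v x := by
    intro x
    have swap : (MB n *ᵥ v) x
        = ∑ i ∈ Finset.range (n+2), Real.sin ((i:ℝ) * θ) * ((MB n *ᵥ FB n i) x) := by
      show ∑ t, MB n x t * v t = _
      rw [hv]
      calc ∑ t, MB n x t * ∑ i ∈ Finset.range (n+2), Real.sin ((i:ℝ) * θ) * FB n i t
          = ∑ t, ∑ i ∈ Finset.range (n+2),
              Real.sin ((i:ℝ) * θ) * (MB n x t * FB n i t) := by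
            apply Finset.sum_congr rfl
            intro t _
            rw [Finset.mul_sum]
            apply Finset.sum_congr rfl
            intro i _
            ring
        _ = ∑ i ∈ Finset.range (n+2), Real.sin ((i:ℝ) * θ) * ∑ t, MB n x t * FB n i t := by
            rw [Finset.sum_comm]
            apply Finset.sum_congr rfl
            intro i _
            rw [Finset.mul_sum]
    rw [swap]
    have hout : ∀ i ∈ Finset.range (n+2), i ∉ Finset.Icc 1 n →
        Real.sin ((i:ℝ) * θ) * ((MB n *ᵥ FB n i) x) = 0 := by
      intro i hi hni
      have : i = 0 ∨ i = n+1 := by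
        simp only [Finset.mem_range] at hi; simp only [Finset.mem_Icc] at hni; omega
      rcases this with h|h <;> subst h
      · push_cast at hc0 ⊢; rw [hc0]; ring
      · rw [hcN]; ring
    rw [← Finset.sum_subset sub1 hout]
    have congr1 : ∀ i ∈ Finset.Icc 1 n,
        Real.sin ((i:ℝ) * θ) * ((MB n *ᵥ FB n i) x)
          = (fun i => Real.sin ((i:ℝ) * θ)) i * ((1/2) * (fun i => FB n i x) (i+1)
              + (if i = 1 then 0 else (1/2) * (fun i => FB n i x) (i-1))) := by
      intro i hi
      have hmem := Finset.mem_Icc.mp hi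
      rw [MB_mulVec_FB n i hmem.1 hmem.2 x]
    rw [Finset.sum_congr rfl congr1]
    have trid := tridiag n hn (fun i => Real.sin ((i:ℝ) * θ)) (fun i => FB n i x)
      (Real.cos θ)
      (by simpa using hc0) (by push_cast at hcN ⊢; exact hcN) (hFtop x)
      (by intro j hj; have := hrec j hj; push_cast at this ⊢; exact this)
    rw [trid]
    have hout2 : ∀ i ∈ Finset.range (n+2), i ∉ Finset.Icc 1 n →
        Real.cos θ * (Real.sin ((i:ℝ) * θ) * FB n i x) = 0 := by
      intro i hi hni
      have : i = 0 ∨ i = n+1 := by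
        simp only [Finset.mem_range] at hi; simp only [Finset.mem_Icc] at hni; omega
      rcases this with h|h <;> subst h
      · push_cast at hc0 ⊢; rw [hc0]; ring
      · rw [hcN]; ring
    rw [Finset.sum_subset sub1 hout2, hv]
    rw [Finset.mul_sum]
  have hθpos : 0 < θ := by
    rw [hθ]
    have : (0:ℝ) < k := by exact_mod_cast hk1
    positivity
  have hθlt : θ < Real.pi := by
    rw [hθ, div_lt_iff₀ (by positivity)]
    have hk : (k:ℝ) < (n:ℝ) + 1 := by exact_mod_cast (by omega : k < n + 1)
    nlinarith [Real.pi_pos]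
  have hsinθ : 0 < Real.sin θ := Real.sin_pos_of_pos_of_lt_pi hθpos hθlt
  have hvne : v ≠ 0 := by
    intro h0
    obtain ⟨m, rfl⟩ : ∃ m, n = m + 1 := ⟨n - 1, by omega⟩
    have hT0 : ∑ x, v x * FB (m+1) 1 x = 0 := by
      rw [h0]; simp
    have hswap : ∑ x, v x * FB (m+1) 1 x
        = ∑ i ∈ Finset.range (m+3),
            Real.sin ((i:ℝ) * θ) * ∑ x, FB (m+1) i x * FB (m+1) 1 x := by
      rw [hv]
      calc ∑ x, (∑ i ∈ Finset.range (m+1+2), Real.sin ((i:ℝ) * θ) * FB (m+1) i x)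
            * FB (m+1) 1 x
          = ∑ x, ∑ i ∈ Finset.range (m+3),
              Real.sin ((i:ℝ) * θ) * (FB (m+1) i x * FB (m+1) 1 x) := by
            apply Finset.sum_congr rfl
            intro x _
            rw [Finset.sum_mul]
            apply Finset.sum_congr rfl
            intro i _
            ring
        _ = _ := by
            rw [Finset.sum_comm]
            apply Finset.sum_congr rfl
            intro i _
            rw [Finset.mul_sum]
    have heval : ∑ i ∈ Finset.range (m+3),
        Real.sin ((i:ℝ) * θ) * ∑ x, FB (m+1) i x * FB (m+1) 1 x
          = Real.sin θ * 2^(m+1) := by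
      rw [Finset.sum_eq_single_of_mem 1 (by simp)]
      · rw [FB_one_sq]; norm_num
      · intro i hi hne
        match i, hne with
        | 0, _ => push_cast at hc0 ⊢; rw [hc0]; ring
        | (j+2), _ => rw [FB_one_orth]; ring
    rw [hswap, heval] at hT0
    have : Real.sin θ = 0 := by
      have h2 : (0:ℝ) < 2^(m+1) := by positivity
      rcases mul_eq_zero.mp hT0 with h|h
      · exact h
      · exfalso; rw [h] at h2; exact lt_irrefl 0 h2
    linarith
  have hker : (MB n - Real.cos θ • (1 : Matrix (Fin (2^n)) (Fin (2^n)) ℝ)) *ᵥ v = 0 := by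
    funext x
    rw [sub_mulVec, Pi.sub_apply, smul_mulVec, one_mulVec, Pi.smul_apply,
      smul_eq_mul, hMv x, Pi.zero_apply, sub_self]
  exact Matrix.exists_mulVec_eq_zero_iff.mp ⟨v, hvne, hker⟩

lemma MB_nonneg (n : ℕ) (i j : Fin (2^n)) : 0 ≤ MB n i j := by
  have ha := nonneg_aB_bB n i j
  have hb := nonneg_aB_bB n j i
  simp only [MB, Pi.smul_apply, Matrix.smul_apply, Matrix.add_apply, transpose_apply,
    smul_eq_mul]
  nlinarith [ha.1, ha.2, hb.1, hb.2]

lemma MB_rowsum (n : ℕ) (i : Fin (2^n)) : ∑ j, MB n i j = 1 := by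
  have h1 := rowsum_aB_add_bB n i
  have h2 := (colsum_aB_bB n i).1
  have h3 := (colsum_aB_bB n i).2
  simp only [MB, Matrix.smul_apply, Matrix.add_apply, transpose_apply, smul_eq_mul]
  rw [Finset.sum_congr rfl (fun j _ => rfl :
    ∀ j ∈ Finset.univ, (1/4 : ℝ) * (aB n i j + aB n j i + bB n i j + bB n j i)
      = 1/4 * (aB n i j + aB n j i + bB n i j + bB n j i))]
  rw [← Finset.mul_sum]
  rw [Finset.sum_add_distrib, Finset.sum_add_distrib, Finset.sum_add_distrib]
  linarith

lemma spectrum_subset (n : ℕ) (x : ℝ)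
    (hdet : (MB n - x • (1 : Matrix (Fin (2^n)) (Fin (2^n)) ℝ)).det = 0) :
    x ∈ Set.Icc (-1 : ℝ) 1 := by
  obtain ⟨v, hvne, hker⟩ := Matrix.exists_mulVec_eq_zero_iff.mpr hdet
  have hMv : ∀ i, (MB n *ᵥ v) i = x * v i := by
    intro i
    have := congrFun hker i
    rw [sub_mulVec, Pi.sub_apply, smul_mulVec, one_mulVec, Pi.smul_apply,
      smul_eq_mul, Pi.zero_apply, sub_eq_zero] at this
    exact this
  have hne : Nonempty (Fin (2^n)) := ⟨⟨0, by positivity⟩⟩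
  obtain ⟨i0, _, hmax⟩ := Finset.exists_max_image Finset.univ (fun i => |v i|)
    Finset.univ_nonempty
  have hvi0 : 0 < |v i0| := by
    obtain ⟨j, hj⟩ := Function.ne_iff.mp hvne
    have := hmax j (Finset.mem_univ j)
    have : 0 < |v j| := abs_pos.mpr hj
    linarith [hmax j (Finset.mem_univ j)]
  have key : |x| * |v i0| ≤ 1 * |v i0| := by
    have e1 : |x| * |v i0| = |(MB n *ᵥ v) i0| := by
      rw [hMv i0, abs_mul]
    rw [e1, one_mul]
    calc |(MB n *ᵥ v) i0| = |∑ j, MB n i0 j * v j| := rfl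
      _ ≤ ∑ j, |MB n i0 j * v j| := Finset.abs_sum_le_sum_abs _ _
      _ = ∑ j, MB n i0 j * |v j| := by
          apply Finset.sum_congr rfl
          intro j _
          rw [abs_mul, abs_of_nonneg (MB_nonneg n i0 j)]
      _ ≤ ∑ j, MB n i0 j * |v i0| := by
          apply Finset.sum_le_sum
          intro j _
          exact mul_le_mul_of_nonneg_left (hmax j (Finset.mem_univ j)) (MB_nonneg n i0 j)
      _ = (∑ j, MB n i0 j) * |v i0| := by rw [Finset.sum_mul]
      _ = |v i0| := by rw [MB_rowsum n i0, one_mul]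
  have hxle : |x| ≤ 1 := le_of_mul_le_mul_right key hvi0
  exact Set.mem_Icc.mpr (abs_le.mp hxle)

lemma cos_lip (a b : ℝ) : |Real.cos a - Real.cos b| ≤ |a - b| := by
  rw [Real.cos_sub_cos]
  have h1 : |Real.sin ((a+b)/2)| ≤ 1 := Real.abs_sin_le_one _
  have h2 : |Real.sin ((a-b)/2)| ≤ |(a-b)/2| := Real.abs_sin_le_abs
  have h3 : |(a-b)/2| = |a-b|/2 := by rw [abs_div]; norm_num
  calc |(-2) * Real.sin ((a+b)/2) * Real.sin ((a-b)/2)|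
      = 2 * (|Real.sin ((a+b)/2)| * |Real.sin ((a-b)/2)|) := by
        rw [abs_mul, abs_mul]; simp [abs_of_nonneg]; ring
    _ ≤ 2 * (1 * (|a-b|/2)) := by
        apply mul_le_mul_of_nonneg_left _ (by norm_num)
        apply mul_le_mul h1 (h3 ▸ h2) (abs_nonneg _) (by norm_num)
    _ = |a-b| := by ring


/-- The union over `n ≥ 1` of the sets of real eigenvalues of the BBS
translation transition operators `M_B⁽ⁿ⁾` is a dense subset of the interval `[−1, 1]`. -/
theorem bbs_spectra_dense_in_Icc :
    (⋃ n ∈ Set.Ici 1, {x : ℝ |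
        Matrix.det (MB n - x • (1 : Matrix (Fin (2 ^ n)) (Fin (2 ^ n)) ℝ)) = 0})
      ⊆ Set.Icc (-1 : ℝ) 1 ∧
    Set.Icc (-1 : ℝ) 1 ⊆ closure (⋃ n ∈ Set.Ici 1, {x : ℝ |
        Matrix.det (MB n - x • (1 : Matrix (Fin (2 ^ n)) (Fin (2 ^ n)) ℝ)) = 0}) := by
  constructor
  · intro x hx
    rw [Set.mem_iUnion₂] at hx
    obtain ⟨n, _, hdet⟩ := hx
    exact spectrum_subset n x hdet
  · intro x hx
    rw [Metric.mem_closure_iff]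
    intro ε hε
    set θ := Real.arccos x with hθdef
    have hθ0 : 0 ≤ θ := Real.arccos_nonneg x
    have hθπ : θ ≤ Real.pi := Real.arccos_le_pi x
    have hcosθ : Real.cos θ = x := Real.cos_arccos hx.1 hx.2
    obtain ⟨n0, hn0⟩ := exists_nat_gt (Real.pi / ε)
    set n := n0 + 1 with hndef
    have hn1 : 1 ≤ n := by omega
    have hnR : (0:ℝ) < (n:ℝ) + 1 := by positivity
    have hπn : Real.pi / ((n:ℝ)+1) < ε := by
      rw [div_lt_iff₀ hnR]
      have h1 : Real.pi / ε < n0 := hn0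
      have h2 : Real.pi < ε * n0 := by
        rw [div_lt_iff₀ hε] at h1
        linarith
      have h3 : (n0:ℝ) ≤ (n:ℝ) + 1 := by
        rw [hndef]; push_cast; linarith
      nlinarith
    -- choose k
    set r := θ * ((n:ℝ)+1) / Real.pi with hrdef
    have hr0 : 0 ≤ r := by
      rw [hrdef]
      positivity
    have hrn : r ≤ (n:ℝ) + 1 := by
      rw [hrdef, div_le_iff₀ Real.pi_pos]
      nlinarith [Real.pi_pos]
    set m := ⌊r⌋₊ with hmdef
    have hm1 : (m:ℝ) ≤ r := Nat.floor_le hr0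
    have hm2 : r < (m:ℝ) + 1 := Nat.lt_floor_add_one r
    set k := min n (max 1 m) with hkdef
    have hk1 : 1 ≤ k := by omega
    have hkn : k ≤ n := by omega
    have hkA : (k:ℝ) ≤ r + 1 := by
      have : k ≤ m + 1 := by omega
      have : (k:ℝ) ≤ (m:ℝ) + 1 := by exact_mod_cast this
      linarith
    have hkB : r ≤ (k:ℝ) + 1 := by
      rcases le_or_gt m n with hmn | hmn
      · have : m ≤ k := by omega
        have : (m:ℝ) ≤ (k:ℝ) := by exact_mod_cast this
        linarith
      · have hkn' : k = n := by omega
        have : ((n:ℝ)) ≤ (k:ℝ) := by rw [hkn']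
        linarith
    have hθr : θ = r * Real.pi / ((n:ℝ)+1) := by
      rw [hrdef]
      field_simp
    have hclose : |θ - (k:ℝ) * Real.pi / ((n:ℝ)+1)| ≤ Real.pi / ((n:ℝ)+1) := by
      rw [hθr, abs_le]
      have hppos : (0:ℝ) < Real.pi / ((n:ℝ)+1) := by positivity
      constructor
      · rw [neg_le, neg_sub]
        have : (k:ℝ) * Real.pi / ((n:ℝ)+1) - r * Real.pi / ((n:ℝ)+1)
            = ((k:ℝ) - r) * (Real.pi / ((n:ℝ)+1)) := by ring
        rw [this]
        nlinarith
      · have : r * Real.pi / ((n:ℝ)+1) - (k:ℝ) * Real.pi / ((n:ℝ)+1)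
            = (r - (k:ℝ)) * (Real.pi / ((n:ℝ)+1)) := by ring
        rw [this]
        nlinarith
    refine ⟨Real.cos ((k:ℝ) * Real.pi / ((n:ℝ)+1)), ?_, ?_⟩
    · rw [Set.mem_iUnion₂]
      refine ⟨n, hn1, ?_⟩
      have := eig_det n k hn1 hk1 hkn
      exact this
    · rw [Real.dist_eq, ← hcosθ]
      calc |Real.cos θ - Real.cos ((k:ℝ) * Real.pi / ((n:ℝ)+1))|
          ≤ |θ - (k:ℝ) * Real.pi / ((n:ℝ)+1)| := cos_lip _ _
        _ ≤ Real.pi / ((n:ℝ)+1) := hclose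
        _ < ε := hπn
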